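/- arXiv:1202.3103 — 2 statements merged into one kernel-verified Lean document; each statement's English description precedes it below -/
import Mathlib

section
/- Let t be a parameter, f(w) = e^{-w} - t e^w, g(w) = e^{-w} + t e^w, and let gamma be a real number and alpha a positive integer. Then the alpha-th derivative of f^{-gamma-1} with respect to w has the form (f^{-gamma-1})^{(alpha)} = (gamma+1)(gamma+2)...(gamma+alpha) f^{-gamma-alpha-1} g^{alpha} + sum_{k=1}^{floor(alpha/2)} c_k(gamma) f^{-gamma+2k-alpha-1} g^{alpha-2k}, where the coefficients c_1(gamma), ..., c_{floor(alpha/2)}(gamma) are polynomials in gamma with integer coefficients (depending on alpha but not on w or t). -/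
open Polynomial Finset

noncomputable def Pc : ℕ → ℕ → Polynomial ℤ
  | 0, k => if k = 0 then 1 else 0
  | (α+1), k => (X + C ((α : ℤ) + 1 - 2 * k)) * Pc α k +
      (if k = 0 then 0 else C ((2 * k : ℤ) - 2 - α) * Pc α (k - 1))

lemma Pc_eq_zero : ∀ (α k : ℕ), α < 2 * k → Pc α k = 0 := by
  intro α
  induction α with
  | zero => intro k h; have : k ≠ 0 := by omega
            simp [Pc, this]
  | succ α ih =>
    intro k h
    have hk : k ≠ 0 := by omega
    rw [Pc, if_neg hk, ih k (by omega)]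
    rcases Nat.lt_or_ge α (2 * (k-1)) with h1 | h1
    · rw [ih (k-1) h1]; ring
    · have h2 : (2 * k : ℤ) - 2 - α = 0 := by omega
      rw [h2]; simp

lemma Pc_zero_eval (γ : ℝ) : ∀ α : ℕ, (aeval γ (Pc α 0) : ℝ) = ∏ i ∈ range α, (γ + i + 1) := by
  intro α
  induction α with
  | zero => simp [Pc]
  | succ α ih =>
    rw [Pc, if_pos rfl, Finset.prod_range_succ]
    simp only [map_add, map_mul, aeval_X, aeval_C, map_zero, add_zero, ih]
    push_cast
    ring

lemma key (t γ : ℝ) : ∀ (α : ℕ) (w : ℝ), 0 < Real.exp (-w) - t * Real.exp w →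
    iteratedDeriv α (fun w => (Real.exp (-w) - t * Real.exp w) ^ (-γ - 1)) w
      = ∑ k ∈ range (α + 1),
          (aeval γ (Pc α k) : ℝ) * (Real.exp (-w) - t * Real.exp w) ^ (-γ + 2 * (k:ℝ) - α - 1)
            * (Real.exp (-w) + t * Real.exp w) ^ (α - 2 * k) := by
  intro α
  induction α with
  | zero =>
    intro w hw
    norm_num [Pc]
  | succ α ih =>
    intro w hw
    -- notation
    set f : ℝ → ℝ := fun w => Real.exp (-w) - t * Real.exp w with hfdef
    set g : ℝ → ℝ := fun w => Real.exp (-w) + t * Real.exp w with hgdef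
    have hU : IsOpen {w : ℝ | 0 < f w} := by
      apply isOpen_lt continuous_const
      apply Continuous.sub
      · exact Real.continuous_exp.comp continuous_neg
      · exact continuous_const.mul Real.continuous_exp
    have hmem : {w : ℝ | 0 < f w} ∈ nhds w := hU.mem_nhds hw
    have heq : (iteratedDeriv α (fun w => f w ^ (-γ - 1)))
        =ᶠ[nhds w] fun w => ∑ k ∈ range (α + 1),
          (aeval γ (Pc α k) : ℝ) * f w ^ (-γ + 2 * (k:ℝ) - α - 1) * g w ^ (α - 2 * k) := by
      filter_upwards [hmem] with w' hw'
      exact ih w' hw'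
    -- derivatives of f and g
    have hf' : HasDerivAt f (-(g w)) w := by
      have h1 : HasDerivAt (fun w : ℝ => Real.exp (-w)) (-Real.exp (-w)) w := by
        simpa using (hasDerivAt_neg w).exp
      have h2 := (Real.hasDerivAt_exp w).const_mul t
      have := h1.fun_sub h2
      refine this.congr_deriv ?_
      show _ = -(Real.exp (-w) + t * Real.exp w); ring
    have hg' : HasDerivAt g (-(f w)) w := by
      have h1 : HasDerivAt (fun w : ℝ => Real.exp (-w)) (-Real.exp (-w)) w := by
        simpa using (hasDerivAt_neg w).exp
      have h2 := (Real.hasDerivAt_exp w).const_mul t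
      have := h1.fun_add h2
      refine this.congr_deriv ?_
      show _ = -(Real.exp (-w) - t * Real.exp w); ring
    -- derivative of each summand
    have hterm : ∀ k ∈ range (α + 1), HasDerivAt
        (fun w => (aeval γ (Pc α k) : ℝ) * f w ^ (-γ + 2 * (k:ℝ) - α - 1) * g w ^ (α - 2 * k))
        ((aeval γ (Pc α k) : ℝ) * (-(g w) * (-γ + 2 * (k:ℝ) - α - 1) * f w ^ ((-γ + 2 * (k:ℝ) - α - 1) - 1)) * g w ^ (α - 2 * k)
          + (aeval γ (Pc α k) : ℝ) * f w ^ (-γ + 2 * (k:ℝ) - α - 1)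
              * ((α - 2 * k : ℕ) * g w ^ (α - 2 * k - 1) * (-(f w)))) w := by
      intro k _
      exact ((hf'.rpow_const (Or.inl hw.ne')).const_mul _).mul (hg'.pow _)
    have hsum := HasDerivAt.fun_sum hterm
    rw [iteratedDeriv_succ, heq.deriv_eq, hsum.deriv]
    -- now pure algebra
    have hstep : ∀ k ∈ range (α + 1),
        (aeval γ (Pc α k) : ℝ) * (-(g w) * (-γ + 2 * (k:ℝ) - α - 1) * f w ^ ((-γ + 2 * (k:ℝ) - α - 1) - 1)) * g w ^ (α - 2 * k)
          + (aeval γ (Pc α k) : ℝ) * f w ^ (-γ + 2 * (k:ℝ) - α - 1)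
              * ((α - 2 * k : ℕ) * g w ^ (α - 2 * k - 1) * (-(f w)))
        = (aeval γ ((X + C ((α : ℤ) + 1 - 2 * k)) * Pc α k) : ℝ)
              * f w ^ (-γ + 2 * (k:ℝ) - (α+1:ℕ) - 1) * g w ^ ((α+1) - 2 * k)
          + (aeval γ (C ((2 * (k+1) : ℤ) - 2 - α) * Pc α k) : ℝ)
              * f w ^ (-γ + 2 * ((k+1 : ℕ):ℝ) - (α+1:ℕ) - 1) * g w ^ ((α+1) - 2 * (k+1)) := by
      intro k _
      by_cases h2k : 2 * k ≤ α
      · have e1 : (-γ + 2 * (k:ℝ) - α - 1) - 1 = -γ + 2 * (k:ℝ) - (α+1:ℕ) - 1 := by push_cast; ring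
        have e2 : -γ + 2 * ((k+1:ℕ):ℝ) - (α+1:ℕ) - 1 = (-γ + 2 * (k:ℝ) - α - 1) + 1 := by push_cast; ring
        have e3 : (α+1) - 2 * k = (α - 2 * k) + 1 := by omega
        have e4 : (α+1) - 2 * (k+1) = α - 2 * k - 1 := by omega
        rw [e2, e3, e4, Real.rpow_add_one hw.ne', pow_succ, ← e1]
        simp only [map_add, map_mul, aeval_X, aeval_C]
        push_cast [Nat.cast_sub h2k]
        norm_num
        ring
      · rw [Pc_eq_zero α k (by omega)]
        simp
    rw [Finset.sum_congr rfl hstep, Finset.sum_add_distrib]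
    -- RHS decomposition
    have hR : ∀ k ∈ range (α + 1 + 1),
        (aeval γ (Pc (α+1) k) : ℝ) * f w ^ (-γ + 2 * (k:ℝ) - (α+1:ℕ) - 1) * g w ^ ((α+1) - 2 * k)
        = (aeval γ ((X + C ((α : ℤ) + 1 - 2 * k)) * Pc α k) : ℝ)
              * f w ^ (-γ + 2 * (k:ℝ) - (α+1:ℕ) - 1) * g w ^ ((α+1) - 2 * k)
          + (aeval γ (if k = 0 then 0 else C ((2 * k : ℤ) - 2 - α) * Pc α (k-1)) : ℝ)
              * f w ^ (-γ + 2 * (k:ℝ) - (α+1:ℕ) - 1) * g w ^ ((α+1) - 2 * k) := by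
      intro k _
      rw [show Pc (α+1) k = (X + C ((α : ℤ) + 1 - 2 * k)) * Pc α k +
          (if k = 0 then 0 else C ((2 * k : ℤ) - 2 - α) * Pc α (k - 1)) from rfl]
      rw [map_add]
      push_cast
      ring
    rw [Finset.sum_congr rfl hR, Finset.sum_add_distrib]
    congr 1
    · conv_rhs => rw [Finset.sum_range_succ]
      rw [Pc_eq_zero α (α+1) (by omega)]
      simp
    · conv_rhs => rw [Finset.sum_range_succ']
      rw [if_pos rfl]
      simp only [map_zero, zero_mul, add_zero]
      refine Finset.sum_congr rfl fun k _ => ?_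
      rw [if_neg (Nat.succ_ne_zero k), Nat.add_sub_cancel]
      push_cast
      ring

/-- Structural formula for the α-th derivative of `f ^ (-γ-1)`,
`f w = e^{-w} - t e^w`, `g w = e^{-w} + t e^w`, with integer-coefficient
polynomials `c k` in γ depending only on α. -/
theorem iteratedDeriv_pow_structure (α : ℕ) (hα : 0 < α) :
    ∃ c : ℕ → Polynomial ℤ,
      ∀ (t γ : ℝ) (f g F : ℝ → ℝ),
        f = (fun w => Real.exp (-w) - t * Real.exp w) →
        g = (fun w => Real.exp (-w) + t * Real.exp w) →
        F = (fun w => f w ^ (-γ - 1)) →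
        ∀ w, 0 < f w →
          iteratedDeriv α F w =
            (∏ i ∈ Finset.range α, (γ + i + 1)) * f w ^ (-γ - α - 1) * g w ^ α +
              ∑ k ∈ Finset.Icc 1 (α / 2),
                (Polynomial.aeval γ (c k)) * f w ^ (-γ + 2 * k - α - 1) * g w ^ (α - 2 * k) := by
  refine ⟨fun k => Pc α k, ?_⟩
  intro t γ f g F hf hg hF w hw
  subst hf hg hF
  simp only at hw ⊢
  rw [key t γ α w hw]
  rw [show range (α+1) = insert 0 (Finset.Icc 1 α) by
    ext x; simp only [Finset.mem_range, Finset.mem_insert, Finset.mem_Icc]; omega]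
  rw [Finset.sum_insert (by simp)]
  congr 1
  · rw [Pc_zero_eval]
    norm_num
  · refine (Finset.sum_subset (Finset.Icc_subset_Icc_right (by omega)) ?_).symm
    intro k hk hk2
    rw [Pc_eq_zero α k ?_]
    · simp
    · simp only [Finset.mem_Icc] at hk hk2
      omega
end

section
/- Special case gamma = 0 of the Heo--Xu identity: for non-negative integers s, d and non-negative integers alpha_0, ..., alpha_d with alpha_0 + ... + alpha_d = 2s+1, one has sum_{j=0}^{s} (-1)^j C(2s+1+d, j) * [ sum over beta_0 + ... + beta_d = s-j of prod_{i=0}^{d} (2 beta_i + 1)^{alpha_i} ] = 2^{2s} * alpha_0! * alpha_1! * ... * alpha_d!. -/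
open Finset PowerSeries

/-- Coefficients of the polynomials `P_a` with `∑_b (2b+1)^a x^(2b+1) = P_a(x)/(1-x²)^(a+1)`. -/
def hx : ℕ → ℕ → ℤ
  | 0, t => if t = 0 then 1 else 0
  | a + 1, 0 => hx a 0
  | a + 1, t + 1 => (2 * (t : ℤ) + 3) * hx a (t + 1) + (2 * (a : ℤ) + 1 - 2 * t) * hx a t

lemma hx_zero (a : ℕ) : hx a 0 = 1 := by
  induction a with
  | zero => simp [hx]
  | succ a ih => simpa [hx] using ih

lemma hx_eq_zero {a t : ℕ} (h : a < t) : hx a t = 0 := by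
  induction a generalizing t with
  | zero => cases t with
    | zero => omega
    | succ t => simp [hx]
  | succ a ih =>
    cases t with
    | zero => omega
    | succ t =>
      rw [hx, ih (by omega), ih (by omega)]
      ring

lemma hx_self (a : ℕ) : hx a a = 1 := by
  induction a with
  | zero => simp [hx]
  | succ a ih =>
    show hx (a + 1) (a + 1) = 1
    rw [hx, hx_eq_zero (by omega), ih]
    ring

lemma hx_sum (a : ℕ) : ∑ t ∈ range (a + 1), hx a t = 2 ^ a * (a.factorial : ℤ) := by
  induction a with
  | zero => simp [hx]
  | succ a ih =>
    have h1 : ∑ t ∈ range (a + 2), hx (a + 1) t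
        = (∑ t ∈ range (a + 1), (2 * (t : ℤ) + 3) * hx a (t + 1))
          + ((∑ t ∈ range (a + 1), (2 * (a : ℤ) + 1 - 2 * t) * hx a t) + hx a 0) := by
      rw [Finset.sum_range_succ' (fun t => hx (a + 1) t) (a + 1)]
      simp only [hx]
      rw [Finset.sum_add_distrib, add_assoc]
    have h2 : ∑ t ∈ range (a + 1), (2 * (t : ℤ) + 3) * hx a (t + 1)
        = ∑ t ∈ range (a + 1), (2 * (t : ℤ) + 1) * hx a t - hx a 0 := by
      have key := Finset.sum_range_succ' (fun t => (2 * (t : ℤ) + 1) * hx a t) (a + 1)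
      have h3 : ∑ t ∈ range (a + 2), (2 * (t : ℤ) + 1) * hx a t
          = ∑ t ∈ range (a + 1), (2 * (t : ℤ) + 1) * hx a t := by
        rw [Finset.sum_range_succ, hx_eq_zero (by omega)]
        ring
      push_cast at key ⊢
      rw [h3] at key
      have h4 : ∑ t ∈ range (a + 1), (2 * ((t : ℤ) + 1) + 1) * hx a (t + 1)
          = ∑ t ∈ range (a + 1), (2 * (t : ℤ) + 3) * hx a (t + 1) := by
        apply Finset.sum_congr rfl; intro t _; ring
      rw [h4] at key
      linarith [key]
    have h6 : ∑ t ∈ range (a + 1), (2 * (t : ℤ) + 1) * hx a t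
          + ∑ t ∈ range (a + 1), (2 * (a : ℤ) + 1 - 2 * t) * hx a t
        = (2 * (a : ℤ) + 2) * ∑ t ∈ range (a + 1), hx a t := by
      rw [← Finset.sum_add_distrib, Finset.mul_sum]
      apply Finset.sum_congr rfl; intro t _; ring
    rw [h1, h2]
    push_cast [Nat.factorial_succ]
    linear_combination h6 + (2 * (a : ℤ) + 2) * ih

lemma hx_palindrome {a t : ℕ} (h : t ≤ a) : hx a (a - t) = hx a t := by
  induction a generalizing t with
  | zero => interval_cases t; rfl
  | succ a ih =>
    cases t with
    | zero => rw [Nat.sub_zero, hx_self, hx_zero]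
    | succ t =>
      rcases Nat.eq_or_lt_of_le h with heq | hlt
      · have : a = t := by omega
        subst this
        rw [Nat.sub_self, hx_self, hx_zero]
      · have ht : t + 1 ≤ a := by omega
        have hu : a + 1 - (t + 1) = (a - (t + 1)) + 1 := by omega
        rw [hu, hx]
        have hv : a - (t + 1) + 1 = a - t := by omega
        rw [hv, ih (by omega : t ≤ a), ih ht]
        show (2 * ((a - (t + 1) : ℕ) : ℤ) + 3) * hx a t
            + (2 * (a : ℤ) + 1 - 2 * ((a - (t + 1) : ℕ) : ℤ)) * hx a (t + 1) = hx (a + 1) (t + 1)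
        rw [hx]
        push_cast [Nat.cast_sub ht]
        ring


lemma hx_def0 (t : ℕ) : hx 0 t = if t = 0 then 1 else 0 := by
  cases t <;> rfl

lemma hx_defS0 (a : ℕ) : hx (a + 1) 0 = hx a 0 := rfl

lemma hx_defS (a t : ℕ) : hx (a + 1) (t + 1)
    = (2 * (t : ℤ) + 3) * hx a (t + 1) + (2 * (a : ℤ) + 1 - 2 * t) * hx a t := rfl

lemma bracket (a t u : ℕ) :
    (2 * (t : ℤ) + 1) * ((u + a + 1).choose (a + 1) : ℤ)
      + (2 * (a : ℤ) + 1 - 2 * t) * ((u + a).choose (a + 1) : ℤ)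
    = (2 * ((t : ℤ) + u) + 1) * ((u + a).choose a : ℤ) := by
  have h1 : (u + a + 1).choose (a + 1) = (u + a).choose a + (u + a).choose (a + 1) :=
    Nat.choose_succ_succ (u + a) a
  have h2 : ((u + a).choose (a + 1) : ℤ) * (a + 1) = ((u + a).choose a : ℤ) * u := by
    have := Nat.choose_succ_right_eq (u + a) a
    have h3 : u + a - a = u := by omega
    rw [h3] at this
    exact_mod_cast congrArg (Nat.cast : ℕ → ℤ) this
  rw [h1]
  push_cast
  linear_combination 2 * h2

lemma key1 (a b : ℕ) :
    (2 * (b : ℤ) + 1) ^ a = ∑ t ∈ range (b + 1), hx a t * (((b - t + a).choose a : ℤ)) := by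
  induction a generalizing b with
  | zero =>
    simp only [pow_zero, Nat.choose_zero_right, Nat.cast_one, mul_one, hx_def0]
    rw [Finset.sum_ite_eq' (range (b+1)) 0 (fun _ => (1:ℤ))]
    simp
  | succ a ih =>
    have hA : ∑ t ∈ range (b + 1), hx (a+1) t * (((b - t + (a+1)).choose (a+1) : ℤ))
        = (∑ t ∈ range b, (2 * (t : ℤ) + 3) * hx a (t + 1) * ((b - t + a).choose (a+1) : ℤ))
          + (∑ t ∈ range b, (2 * (a : ℤ) + 1 - 2 * t) * hx a t * ((b - t + a).choose (a+1) : ℤ))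
          + hx a 0 * ((b + a + 1).choose (a+1) : ℤ) := by
      rw [Finset.sum_range_succ' (fun t => hx (a+1) t * (((b - t + (a+1)).choose (a+1) : ℤ))) b]
      have e1 : ∀ t ∈ range b, hx (a+1) (t+1) * (((b - (t+1) + (a+1)).choose (a+1) : ℤ))
          = (2 * (t : ℤ) + 3) * hx a (t + 1) * ((b - t + a).choose (a+1) : ℤ)
            + (2 * (a : ℤ) + 1 - 2 * t) * hx a t * ((b - t + a).choose (a+1) : ℤ) := by
        intro t htmem
        rw [mem_range] at htmem
        have harg : b - (t+1) + (a+1) = b - t + a := by omega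
        rw [harg, hx_defS]
        ring
      rw [Finset.sum_congr rfl e1, Finset.sum_add_distrib]
      have harg0 : b - 0 + (a + 1) = b + a + 1 := by omega
      rw [harg0, hx_defS0]
    have hB1 : ∑ t ∈ range (b+1), (2 * (t : ℤ) + 1) * hx a t * ((b - t + a + 1).choose (a + 1) : ℤ)
        = (∑ t ∈ range b, (2 * (t : ℤ) + 3) * hx a (t + 1) * ((b - t + a).choose (a+1) : ℤ))
          + hx a 0 * ((b + a + 1).choose (a+1) : ℤ) := by
      rw [Finset.sum_range_succ'
        (fun t => (2 * (t : ℤ) + 1) * hx a t * ((b - t + a + 1).choose (a + 1) : ℤ)) b]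
      congr 1
      · apply Finset.sum_congr rfl
        intro t htmem
        rw [mem_range] at htmem
        have harg : b - (t+1) + a + 1 = b - t + a := by omega
        rw [harg]
        push_cast
        ring
      · have harg0 : b - 0 + a + 1 = b + a + 1 := by omega
        rw [harg0]
        norm_num
    have hB2 : ∑ t ∈ range (b+1), (2 * (a : ℤ) + 1 - 2 * t) * hx a t * ((b - t + a).choose (a + 1) : ℤ)
        = ∑ t ∈ range b, (2 * (a : ℤ) + 1 - 2 * t) * hx a t * ((b - t + a).choose (a+1) : ℤ) := by
      rw [Finset.sum_range_succ]
      have hz : (b - b + a).choose (a+1) = 0 := by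
        rw [Nat.sub_self, zero_add]; exact Nat.choose_eq_zero_of_lt (by omega)
      rw [hz]
      norm_num
    have hR : ∑ t ∈ range (b + 1), hx a t *
            ((2 * (t : ℤ) + 1) * ((b - t + a + 1).choose (a + 1) : ℤ)
              + (2 * (a : ℤ) + 1 - 2 * t) * ((b - t + a).choose (a + 1) : ℤ))
        = (∑ t ∈ range (b+1), (2 * (t : ℤ) + 1) * hx a t * ((b - t + a + 1).choose (a + 1) : ℤ))
          + ∑ t ∈ range (b+1), (2 * (a : ℤ) + 1 - 2 * t) * hx a t * ((b - t + a).choose (a + 1) : ℤ) := by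
      rw [← Finset.sum_add_distrib]
      apply Finset.sum_congr rfl
      intro t _; ring
    have step2 : ∑ t ∈ range (b+1), hx a t *
            ((2 * (t : ℤ) + 1) * ((b - t + a + 1).choose (a + 1) : ℤ)
              + (2 * (a : ℤ) + 1 - 2 * t) * ((b - t + a).choose (a + 1) : ℤ))
        = ∑ t ∈ range (b+1), (2 * (b : ℤ) + 1) * (hx a t * ((b - t + a).choose a : ℤ)) := by
      apply Finset.sum_congr rfl
      intro t htmem
      rw [mem_range] at htmem
      have hb : (b : ℤ) = (t : ℤ) + ((b - t : ℕ) : ℤ) := by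
        push_cast [Nat.cast_sub (by omega : t ≤ b)]; ring
      have hbr := bracket a t (b - t)
      have harg : b - t + a + 1 = b - t + a + 1 := rfl
      calc hx a t * ((2 * (t : ℤ) + 1) * ((b - t + a + 1).choose (a + 1) : ℤ)
              + (2 * (a : ℤ) + 1 - 2 * t) * ((b - t + a).choose (a + 1) : ℤ))
          = hx a t * ((2 * ((t : ℤ) + (b - t : ℕ)) + 1) * ((b - t + a).choose a : ℤ)) := by
            rw [hbr]
        _ = (2 * (b : ℤ) + 1) * (hx a t * ((b - t + a).choose a : ℤ)) := by
            rw [hb]; ring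
    calc (2 * (b : ℤ) + 1) ^ (a + 1) = (2 * (b : ℤ) + 1) * (2 * (b : ℤ) + 1) ^ a := by ring
      _ = (2 * (b : ℤ) + 1) * ∑ t ∈ range (b + 1), hx a t * (((b - t + a).choose a : ℤ)) := by
          rw [ih]
      _ = ∑ t ∈ range (b+1), (2 * (b : ℤ) + 1) * (hx a t * ((b - t + a).choose a : ℤ)) :=
          (Finset.mul_sum _ _ _)
      _ = ∑ t ∈ range (b + 1), hx a t *
            ((2 * (t : ℤ) + 1) * ((b - t + a + 1).choose (a + 1) : ℤ)
              + (2 * (a : ℤ) + 1 - 2 * t) * ((b - t + a).choose (a + 1) : ℤ)) := step2.symm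
      _ = (∑ t ∈ range (b+1), (2 * (t : ℤ) + 1) * hx a t * ((b - t + a + 1).choose (a + 1) : ℤ))
          + ∑ t ∈ range (b+1), (2 * (a : ℤ) + 1 - 2 * t) * hx a t * ((b - t + a).choose (a + 1) : ℤ) := hR
      _ = ∑ t ∈ range (b + 1), hx (a+1) t * (((b - t + (a+1)).choose (a+1) : ℤ)) := by
          rw [hB1, hB2, hA]; ring

noncomputable def Sodd (w : ℕ → ℤ) : PowerSeries ℤ :=
  PowerSeries.mk fun n => if n % 2 = 1 then w ((n - 1) / 2) else 0

noncomputable def Sev (v : ℕ → ℤ) : PowerSeries ℤ :=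
  PowerSeries.mk fun n => if n % 2 = 0 then v (n / 2) else 0

lemma coeff_Sodd (w : ℕ → ℤ) (n : ℕ) :
    PowerSeries.coeff n (Sodd w) = if n % 2 = 1 then w ((n - 1) / 2) else 0 := by
  simp [Sodd, coeff_mk]

lemma coeff_Sodd_odd (w : ℕ → ℤ) (b : ℕ) :
    PowerSeries.coeff (2 * b + 1) (Sodd w) = w b := by
  rw [coeff_Sodd]
  have h1 : (2 * b + 1) % 2 = 1 := by omega
  have h2 : (2 * b + 1 - 1) / 2 = b := by omega
  rw [h1, h2]
  simp

lemma coeff_Sev (v : ℕ → ℤ) (n : ℕ) :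
    PowerSeries.coeff n (Sev v) = if n % 2 = 0 then v (n / 2) else 0 := by
  simp [Sev, coeff_mk]

lemma coeff_odd_even_mul (u v : ℕ → ℤ) (b : ℕ) :
    PowerSeries.coeff (2 * b + 1) (Sodd u * Sev v)
      = ∑ t ∈ range (b + 1), u t * v (b - t) := by
  rw [PowerSeries.coeff_mul, Finset.Nat.sum_antidiagonal_eq_sum_range_succ_mk]
  refine (Finset.sum_of_injOn (fun t => 2 * t + 1) ?_ ?_ ?_ ?_).symm
  · intro x _ y _ h
    simp only at h
    omega
  · intro t ht
    simp only [coe_range, Set.mem_Iio, mem_coe, mem_range] at ht ⊢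
    omega
  · intro j hj hjim
    simp only [mem_range] at hj
    rcases Nat.even_or_odd' j with ⟨m, rfl | rfl⟩
    · rw [coeff_Sodd]
      have : 2 * m % 2 = 0 := by omega
      rw [this]
      norm_num
    · exfalso
      apply hjim
      refine ⟨m, ?_, rfl⟩
      simp only [coe_range, Set.mem_Iio, mem_coe, mem_range]
      omega
  · intro t ht
    simp only [mem_range] at ht
    rw [coeff_Sodd_odd, coeff_Sev]
    have h1 : 2 * b + 1 - (2 * t + 1) = 2 * (b - t) := by omega
    have h2 : (2 * (b - t)) % 2 = 0 := by omega
    have h3 : (2 * (b - t)) / 2 = b - t := by omega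
    rw [h1, h2, h3]
    simp

lemma coeff_odd_even_mul_even (u v : ℕ → ℤ) (b : ℕ) :
    PowerSeries.coeff (2 * b) (Sodd u * Sev v) = 0 := by
  rw [PowerSeries.coeff_mul]
  apply Finset.sum_eq_zero
  intro x hx
  rw [Finset.HasAntidiagonal.mem_antidiagonal] at hx
  rw [coeff_Sodd, coeff_Sev]
  rcases Nat.even_or_odd' x.1 with ⟨m, h | h⟩
  · rw [h]
    have : 2 * m % 2 = 0 := by omega
    rw [this]
    norm_num
  · have h2 : x.2 % 2 = 1 := by omega
    rw [h2]
    norm_num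

lemma coeff_even_even_mul (u v : ℕ → ℤ) (m : ℕ) :
    PowerSeries.coeff (2 * m) (Sev u * Sev v)
      = ∑ t ∈ range (m + 1), u t * v (m - t) := by
  rw [PowerSeries.coeff_mul, Finset.Nat.sum_antidiagonal_eq_sum_range_succ_mk]
  refine (Finset.sum_of_injOn (fun t => 2 * t) ?_ ?_ ?_ ?_).symm
  · intro x _ y _ h
    simp only at h
    omega
  · intro t ht
    simp only [coe_range, Set.mem_Iio, mem_coe, mem_range] at ht ⊢
    omega
  · intro j hj hjim
    simp only [mem_range] at hj
    rcases Nat.even_or_odd' j with ⟨k, rfl | rfl⟩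
    · exfalso
      apply hjim
      refine ⟨k, ?_, rfl⟩
      simp only [coe_range, Set.mem_Iio, mem_coe, mem_range]
      omega
    · rw [coeff_Sev]
      have : (2 * k + 1) % 2 = 1 := by omega
      rw [this]
      norm_num
  · intro t ht
    simp only [mem_range] at ht
    rw [coeff_Sev, coeff_Sev]
    have h1 : 2 * m - 2 * t = 2 * (m - t) := by omega
    have h2 : 2 * t % 2 = 0 := by omega
    have h3 : 2 * t / 2 = t := by omega
    have h4 : (2 * (m - t)) % 2 = 0 := by omega
    have h5 : (2 * (m - t)) / 2 = m - t := by omega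
    rw [h1, h2, h3, h4, h5]
    simp

lemma coeff_even_even_mul_odd (u v : ℕ → ℤ) (m : ℕ) :
    PowerSeries.coeff (2 * m + 1) (Sev u * Sev v) = 0 := by
  rw [PowerSeries.coeff_mul]
  apply Finset.sum_eq_zero
  intro x hx
  rw [Finset.HasAntidiagonal.mem_antidiagonal] at hx
  rw [coeff_Sev, coeff_Sev]
  rcases Nat.even_or_odd' x.1 with ⟨k, h | h⟩
  · have h2 : x.2 % 2 = 1 := by omega
    rw [h2]
    norm_num
  · rw [h]
    have : (2 * k + 1) % 2 = 1 := by omega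
    rw [this]
    norm_num

lemma one_sub_X_sq_mul_G : ((1 : PowerSeries ℤ) - X ^ 2) * Sev (fun _ => 1) = 1 := by
  have h : ((1 : PowerSeries ℤ) - X ^ 2) * Sev (fun _ => 1)
      = Sev (fun _ => 1) - Sev (fun _ => 1) * X ^ 2 := by ring
  rw [h]
  ext n
  rw [map_sub, PowerSeries.coeff_mul_X_pow', coeff_Sev, PowerSeries.coeff_one]
  rcases Nat.even_or_odd' n with ⟨m, rfl | rfl⟩
  · by_cases hm : m = 0
    · subst hm
      norm_num
    · have h1 : 2 * m % 2 = 0 := by omega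
      have h2 : 2 ≤ 2 * m := by omega
      rw [h1, if_pos h2, coeff_Sev]
      have h3 : (2 * m - 2) % 2 = 0 := by omega
      rw [h3]
      simp
      omega
  · have h1 : (2 * m + 1) % 2 = 1 := by omega
    rw [h1]
    by_cases h2 : 2 ≤ 2 * m + 1
    · rw [if_pos h2, coeff_Sev]
      have h3 : (2 * m + 1 - 2) % 2 = 1 := by omega
      rw [h3]
      simp
    · rw [if_neg h2]
      simp

lemma hsN (c m : ℕ) : ∑ t ∈ range (m + 1), (t + c).choose c = (m + c + 1).choose (c + 1) := by
  induction m with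
  | zero => simp
  | succ m ih =>
    rw [Finset.sum_range_succ, ih]
    have h : m + 1 + c + 1 = (m + c + 1) + 1 := by omega
    have h0 : m + 1 + c = m + c + 1 := by omega
    rw [h0, Nat.choose_succ_succ (m + c + 1) c]
    simp only [Nat.succ_eq_add_one]
    omega

lemma G_pow (c : ℕ) :
    (Sev (fun _ => (1 : ℤ))) ^ (c + 1) = Sev (fun m => ((m + c).choose c : ℤ)) := by
  induction c with
  | zero =>
    rw [pow_one]
    ext n
    rw [coeff_Sev, coeff_Sev]
    simp
  | succ c ih =>
    rw [pow_succ, ih]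
    ext n
    rcases Nat.even_or_odd' n with ⟨m, rfl | rfl⟩
    · rw [coeff_even_even_mul, coeff_Sev]
      have h1 : 2 * m % 2 = 0 := by omega
      have h2 : 2 * m / 2 = m := by omega
      rw [h1, h2]
      simp only [if_true]
      have h3 : ∀ t ∈ range (m + 1), ((t + c).choose c : ℤ) * 1 = ((t + c).choose c : ℤ) := by
        intro t _; ring
      rw [Finset.sum_congr rfl h3]
      have := hsN c m
      have h4 : m + (c + 1) = m + c + 1 := by omega
      rw [h4]
      exact_mod_cast congrArg (Nat.cast : ℕ → ℤ) this
    · rw [coeff_even_even_mul_odd, coeff_Sev]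
      have h1 : (2 * m + 1) % 2 = 1 := by omega
      rw [h1]
      norm_num

lemma sum_antidiagonalTuple_succ {M : Type*} [AddCommMonoid M] (k T : ℕ)
    (F : (Fin (k + 1) → ℕ) → M) :
    ∑ x ∈ Finset.Nat.antidiagonalTuple (k + 1) T, F x
      = ∑ ab ∈ antidiagonal T, ∑ y ∈ Finset.Nat.antidiagonalTuple k ab.2, F (Fin.cons ab.1 y) := by
  rw [Finset.sum_sigma']
  refine Finset.sum_nbij' (i := fun x => ⟨(x 0, T - x 0), Fin.tail x⟩)
    (j := fun y => Fin.cons y.1.1 y.2) ?_ ?_ ?_ ?_ ?_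
  · intro x hxm
    rw [Finset.Nat.mem_antidiagonalTuple, Fin.sum_univ_succ] at hxm
    simp only [Finset.mem_sigma, Finset.HasAntidiagonal.mem_antidiagonal, Finset.Nat.mem_antidiagonalTuple]
    have htl : ∑ i, Fin.tail x i = ∑ i : Fin k, x i.succ := rfl
    constructor
    · omega
    · rw [htl]; omega
  · intro y hym
    simp only [Finset.mem_sigma, Finset.HasAntidiagonal.mem_antidiagonal,
      Finset.Nat.mem_antidiagonalTuple] at hym
    simp only [Finset.Nat.mem_antidiagonalTuple, Fin.sum_univ_succ, Fin.cons_zero,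
      Fin.cons_succ]
    omega
  · intro x hxm
    exact Fin.cons_self_tail x
  · intro y hym
    simp only [Finset.mem_sigma, Finset.HasAntidiagonal.mem_antidiagonal,
      Finset.Nat.mem_antidiagonalTuple] at hym
    obtain ⟨h1, _⟩ := hym
    ext : 1
    · simp only [Fin.cons_zero]
      rw [Prod.ext_iff]
      exact ⟨rfl, by dsimp only; omega⟩
    · simp only [Fin.tail_cons, heq_eq_eq]
  · intro x hxm
    dsimp only
    rw [Fin.cons_self_tail x]

lemma GLfull (k : ℕ) (w : Fin k → ℕ → ℤ) (n : ℕ) :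
    PowerSeries.coeff n (∏ i, Sodd (w i))
      = if n % 2 = k % 2 ∧ k ≤ n then
          ∑ t ∈ Finset.Nat.antidiagonalTuple k ((n - k) / 2), ∏ i, w i (t i)
        else 0 := by
  induction k generalizing n with
  | zero =>
    rw [Finset.univ_eq_empty, Finset.prod_empty, PowerSeries.coeff_one]
    by_cases hn : n = 0
    · subst hn
      simp [Finset.Nat.antidiagonalTuple_zero_zero]
    · rw [if_neg hn]
      by_cases h1 : n % 2 = 0 % 2 ∧ 0 ≤ n
      · rw [if_pos h1]
        obtain ⟨m', hm⟩ : ∃ m', (n - 0) / 2 = m' + 1 := ⟨n / 2 - 1, by omega⟩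
        rw [hm, show m' + 1 = Nat.succ m' from rfl, Finset.Nat.antidiagonalTuple_zero_succ]
        simp
      · rw [if_neg h1]
  | succ k ih =>
    rw [Fin.prod_univ_succ, PowerSeries.coeff_mul,
      Finset.Nat.sum_antidiagonal_eq_sum_range_succ_mk]
    by_cases hmain : n % 2 = (k + 1) % 2 ∧ k + 1 ≤ n
    · rw [if_pos hmain]
      obtain ⟨hpar, hle⟩ := hmain
      set T := (n - (k + 1)) / 2 with hT
      have hnT : n = 2 * T + k + 1 := by omega
      -- reindex the range sum to t0 ∈ range (T+1)
      have main : ∑ x ∈ range (n + 1),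
          PowerSeries.coeff x (Sodd (w 0)) *
            PowerSeries.coeff (n - x) (∏ i : Fin k, Sodd (w i.succ))
          = ∑ t0 ∈ range (T + 1), w 0 t0 *
              ∑ y ∈ Finset.Nat.antidiagonalTuple k (T - t0), ∏ i : Fin k, w i.succ (y i) := by
        refine (Finset.sum_of_injOn (fun t0 => 2 * t0 + 1) ?_ ?_ ?_ ?_).symm
        · intro a _ b _ hab
          simp only at hab
          omega
        · intro t0 ht0
          simp only [coe_range, Set.mem_Iio, mem_coe, mem_range] at ht0 ⊢
          omega
        · intro x hxr hxim
          simp only [mem_range] at hxr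
          rcases Nat.even_or_odd' x with ⟨m, rfl | rfl⟩
          · rw [coeff_Sodd]
            have : 2 * m % 2 = 0 := by omega
            rw [this]
            norm_num
          · -- odd x not in image means m > T; then the second factor vanishes
            have hmT : T < m := by
              by_contra hc
              exact hxim ⟨m, by simp only [coe_range, Set.mem_Iio, mem_coe, mem_range]; omega, rfl⟩
            rw [ih]
            have : ¬((n - (2 * m + 1)) % 2 = k % 2 ∧ k ≤ n - (2 * m + 1)) := by omega
            rw [if_neg this, mul_zero]
        · intro t0 ht0
          simp only [mem_range] at ht0
          rw [coeff_Sodd_odd, ih]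
          have h1 : (n - (2 * t0 + 1)) % 2 = k % 2 ∧ k ≤ n - (2 * t0 + 1) := by omega
          rw [if_pos h1]
          have h2 : (n - (2 * t0 + 1) - k) / 2 = T - t0 := by omega
          rw [h2]
      rw [main, sum_antidiagonalTuple_succ k T
        (fun t => ∏ i : Fin (k + 1), w i (t i)),
        Finset.Nat.sum_antidiagonal_eq_sum_range_succ_mk]
      apply Finset.sum_congr rfl
      intro t0 _
      rw [Finset.mul_sum]
      apply Finset.sum_congr rfl
      intro y _
      rw [Fin.prod_univ_succ, Fin.cons_zero]
      simp only [Fin.cons_succ]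
    · rw [if_neg hmain]
      apply Finset.sum_eq_zero
      intro x hxr
      simp only [mem_range] at hxr
      rcases Nat.even_or_odd' x with ⟨m, rfl | rfl⟩
      · rw [coeff_Sodd]
        have : 2 * m % 2 = 0 := by omega
        rw [this]
        norm_num
      · rw [ih]
        have : ¬((n - (2 * m + 1)) % 2 = k % 2 ∧ k ≤ n - (2 * m + 1)) := by omega
        rw [if_neg this, mul_zero]

lemma final_sum (s d : ℕ) (α : Fin (d + 1) → ℕ) (hα : ∑ i, α i = 2 * s + 1) :
    ∑ T ∈ range (s + 1), ∑ t ∈ Finset.Nat.antidiagonalTuple (d + 1) T, ∏ i, hx (α i) (t i)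
      = 2 ^ (2 * s) * ∏ i, ((α i).factorial : ℤ) := by
  classical
  have hαi : ∀ i, α i ≤ 2 * s + 1 := by
    intro i
    have : α i ≤ ∑ j, α j := Finset.single_le_sum (fun j _ => Nat.zero_le _) (Finset.mem_univ i)
    omega
  set r : ℕ → ℤ := fun T => ∑ t ∈ Finset.Nat.antidiagonalTuple (d + 1) T, ∏ i, hx (α i) (t i)
    with hr
  have hfil : ∀ T, r T = ∑ t ∈ (Finset.Nat.antidiagonalTuple (d + 1) T).filter
      (fun t => ∀ i, t i ≤ α i), ∏ i, hx (α i) (t i) := by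
    intro T
    rw [hr]
    refine (Finset.sum_filter_of_ne ?_).symm
    intro t _ hne
    by_contra hc
    push_neg at hc
    obtain ⟨i, hi⟩ := hc
    exact hne (Finset.prod_eq_zero (Finset.mem_univ i) (hx_eq_zero hi))
  have hsym : ∀ T, T ≤ 2 * s + 1 → r T = r (2 * s + 1 - T) := by
    intro T hT
    rw [hfil, hfil]
    refine Finset.sum_nbij' (i := fun t => fun i => α i - t i) (j := fun t => fun i => α i - t i)
      ?_ ?_ ?_ ?_ ?_
    · intro t htm
      rw [Finset.mem_filter, Finset.Nat.mem_antidiagonalTuple] at htm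
      obtain ⟨hsum, hbd⟩ := htm
      have hs2 : ∑ i, (α i - t i) + ∑ i, t i = 2 * s + 1 := by
        rw [← Finset.sum_add_distrib, ← hα]
        apply Finset.sum_congr rfl
        intro i _
        have := hbd i
        omega
      rw [Finset.mem_filter, Finset.Nat.mem_antidiagonalTuple]
      constructor
      · show ∑ j, (α j - t j) = _
        omega
      · intro i
        show α i - t i ≤ α i
        omega
    · intro t htm
      rw [Finset.mem_filter, Finset.Nat.mem_antidiagonalTuple] at htm
      obtain ⟨hsum, hbd⟩ := htm
      have hs2 : ∑ i, (α i - t i) + ∑ i, t i = 2 * s + 1 := by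
        rw [← Finset.sum_add_distrib, ← hα]
        apply Finset.sum_congr rfl
        intro i _
        have := hbd i
        omega
      rw [Finset.mem_filter, Finset.Nat.mem_antidiagonalTuple]
      constructor
      · show ∑ j, (α j - t j) = _
        omega
      · intro i
        show α i - t i ≤ α i
        omega
    · intro t htm
      rw [Finset.mem_filter] at htm
      funext i
      have := htm.2 i
      dsimp only
      omega
    · intro t htm
      rw [Finset.mem_filter] at htm
      funext i
      have := htm.2 i
      dsimp only
      omega
    · intro t htm
      rw [Finset.mem_filter] at htm
      apply Finset.prod_congr rfl
      intro i _
      exact (hx_palindrome (htm.2 i)).symm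
  have hrefl : ∑ T ∈ range (s + 1), r (s + 1 + T) = ∑ T ∈ range (s + 1), r T := by
    have h1 : ∀ T ∈ range (s + 1), r (s + 1 + T) = r (s - T) := by
      intro T hTm
      rw [mem_range] at hTm
      have := hsym (s + 1 + T) (by omega)
      have harg : 2 * s + 1 - (s + 1 + T) = s - T := by omega
      rw [harg] at this
      exact this
    rw [Finset.sum_congr rfl h1]
    have := Finset.sum_range_reflect r (s + 1)
    have h2 : ∀ T ∈ range (s + 1), r (s + 1 - 1 - T) = r (s - T) := by
      intro T _
      congr 1
    rw [Finset.sum_congr rfl h2] at this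
    exact this
  have hsplit : ∑ T ∈ range (2 * s + 2), r T
      = ∑ T ∈ range (s + 1), r T + ∑ T ∈ range (s + 1), r (s + 1 + T) := by
    have h1 : ∑ T ∈ range (2 * s + 2), r T
        = ∑ T ∈ Ico 0 (s + 1), r T + ∑ T ∈ Ico (s + 1) (2 * s + 2), r T := by
      rw [Finset.sum_Ico_consecutive r (Nat.zero_le _) (by omega : s + 1 ≤ 2 * s + 2)]
      rw [← Finset.range_eq_Ico]
    rw [h1, ← Finset.range_eq_Ico, Finset.sum_Ico_eq_sum_range]
    congr 1
    have h2 : 2 * s + 2 - (s + 1) = s + 1 := by omega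
    rw [h2]
  have htot : ∑ T ∈ range (2 * s + 2), r T = 2 ^ (2 * s + 1) * ∏ i, ((α i).factorial : ℤ) := by
    have stepA : ∑ T ∈ range (2 * s + 2), r T
        = ∑ t ∈ Fintype.piFinset (fun _ : Fin (d + 1) => range (2 * s + 2)),
            ∏ i, hx (α i) (t i) := by
      rw [hr]
      rw [Finset.sum_sigma']
      refine Finset.sum_of_injOn (fun x => x.2) ?_ ?_ ?_ ?_
      · intro x hxm y hym hxy
        simp only [mem_coe, Finset.mem_sigma, mem_range,
          Finset.Nat.mem_antidiagonalTuple] at hxm hym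
        dsimp only at hxy
        ext : 1
        · rw [← hxm.2, ← hym.2, hxy]
        · exact heq_of_eq hxy
      · intro x hxm
        simp only [mem_coe, Finset.mem_sigma, mem_range,
          Finset.Nat.mem_antidiagonalTuple] at hxm
        simp only [mem_coe, Fintype.mem_piFinset, mem_range]
        intro i
        have : x.2 i ≤ ∑ j, x.2 j := Finset.single_le_sum (fun j _ => Nat.zero_le _)
          (Finset.mem_univ i)
        omega
      · intro t htm htim
        simp only [Fintype.mem_piFinset, mem_range] at htm
        have hbig : 2 * s + 2 ≤ ∑ i, t i := by
          by_contra hc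
          push_neg at hc
          apply htim
          refine ⟨⟨∑ i, t i, t⟩, ?_, rfl⟩
          simp only [mem_coe, Finset.mem_sigma, mem_range, Finset.Nat.mem_antidiagonalTuple]
          exact ⟨by omega, trivial⟩
        have hex : ∃ i, α i < t i := by
          by_contra hc
          push_neg at hc
          have : ∑ i, t i ≤ ∑ i, α i := Finset.sum_le_sum (fun i _ => hc i)
          omega
        obtain ⟨i, hi⟩ := hex
        exact Finset.prod_eq_zero (Finset.mem_univ i) (hx_eq_zero hi)
      · intro x _
        rfl
    have stepB : ∑ t ∈ Fintype.piFinset (fun _ : Fin (d + 1) => range (2 * s + 2)),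
            ∏ i, hx (α i) (t i)
        = ∏ i, ∑ b ∈ range (2 * s + 2), hx (α i) b := (Finset.prod_univ_sum _ _).symm
    have stepC : ∀ i : Fin (d + 1), ∑ b ∈ range (2 * s + 2), hx (α i) b
        = 2 ^ (α i) * ((α i).factorial : ℤ) := by
      intro i
      clear stepA stepB
      have hbound := hαi i
      have hsub : range (α i + 1) ⊆ range (2 * s + 2) := Finset.range_subset_range.2 (by omega)
      have hvan : ∀ b ∈ range (2 * s + 2), b ∉ range (α i + 1) → hx (α i) b = 0 := by
        intro b _ hb2
        simp only [mem_range, not_lt] at hb2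
        exact hx_eq_zero (by omega)
      rw [← Finset.sum_subset hsub hvan]
      exact hx_sum (α i)
    rw [stepA, stepB, Finset.prod_congr rfl (fun i _ => stepC i), Finset.prod_mul_distrib,
      Finset.prod_pow_eq_pow_sum, hα]
  have h2A : (2 : ℤ) * ∑ T ∈ range (s + 1), r T
      = 2 * (2 ^ (2 * s) * ∏ i, ((α i).factorial : ℤ)) := by
    have heq := hsplit
    rw [hrefl, htot] at heq
    have hp : (2 : ℤ) ^ (2 * s + 1) = 2 * 2 ^ (2 * s) := by ring
    rw [hp] at heq
    linarith [heq]
  exact mul_left_cancel₀ (by norm_num : (2 : ℤ) ≠ 0) h2A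

lemma PS1' (a : ℕ) : Sodd (fun b => (2 * (b : ℤ) + 1) ^ a)
    = Sodd (hx a) * (Sev (fun _ => 1)) ^ (a + 1) := by
  rw [G_pow]
  ext n
  rcases Nat.even_or_odd' n with ⟨b, rfl | rfl⟩
  · rw [coeff_odd_even_mul_even, coeff_Sodd]
    have h1 : (2 * b) % 2 = 0 := by omega
    rw [h1]
    norm_num
  · rw [coeff_Sodd_odd, coeff_odd_even_mul]
    exact key1 a b

lemma one_sub_sq_pow (Nn : ℕ) : ((1 : PowerSeries ℤ) - X ^ 2) ^ Nn
    = ∑ j ∈ range (Nn + 1), PowerSeries.C ((-1) ^ j * ((Nn.choose j : ℕ) : ℤ)) * X ^ (2 * j) := by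
  rw [sub_pow, ← Finset.sum_range_reflect]
  apply Finset.sum_congr rfl
  intro j hj
  rw [mem_range] at hj
  have h0 : Nn + 1 - 1 - j = Nn - j := by omega
  rw [h0]
  have h1 : Nn - (Nn - j) = j := by omega
  have h2 : Nn - j + Nn = j + 2 * (Nn - j) := by omega
  have h3 : Nn.choose (Nn - j) = Nn.choose j := Nat.choose_symm (by omega)
  rw [h1, h2, h3, one_pow, pow_add, pow_mul, neg_one_sq, one_pow, mul_one]
  rw [map_mul, map_pow, map_neg, map_one, map_natCast, pow_mul]
  ring

lemma coeff_mul_one_sub_sq_pow (f : PowerSeries ℤ) (Nn n : ℕ) :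
    PowerSeries.coeff n (f * ((1 : PowerSeries ℤ) - X ^ 2) ^ Nn)
      = ∑ j ∈ range (Nn + 1), (-1 : ℤ) ^ j * (Nn.choose j : ℤ) *
          (if 2 * j ≤ n then PowerSeries.coeff (n - 2 * j) f else 0) := by
  rw [one_sub_sq_pow, Finset.mul_sum, map_sum]
  apply Finset.sum_congr rfl
  intro j _
  have h : f * (PowerSeries.C ((-1) ^ j * ((Nn.choose j : ℕ) : ℤ)) * X ^ (2 * j))
      = PowerSeries.C ((-1) ^ j * ((Nn.choose j : ℕ) : ℤ)) * (f * X ^ (2 * j)) := by ring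
  rw [h, PowerSeries.coeff_C_mul, PowerSeries.coeff_mul_X_pow']

lemma hinner_lem (s d j : ℕ) (α : Fin (d + 1) → ℕ) (hj : j ≤ s) :
    ∑ β ∈ Finset.Nat.antidiagonalTuple (d + 1) (s - j), ∏ i, ((2 * (β i : ℤ) + 1) ^ (α i))
      = PowerSeries.coeff (2 * s + d + 1 - 2 * j)
          (∏ i, Sodd (fun b => (2 * (b : ℤ) + 1) ^ (α i))) := by
  rw [GLfull]
  have hcond : (2 * s + d + 1 - 2 * j) % 2 = (d + 1) % 2 ∧ d + 1 ≤ 2 * s + d + 1 - 2 * j := by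
    omega
  rw [if_pos hcond]
  have harg : (2 * s + d + 1 - 2 * j - (d + 1)) / 2 = s - j := by omega
  rw [harg]

lemma hstep1_lem (s d : ℕ) (α : Fin (d + 1) → ℕ) :
    ∑ j ∈ Finset.range (s + 1),
        (-1 : ℤ) ^ j * (2 * s + 1 + d).choose j *
          ∑ β ∈ Finset.Nat.antidiagonalTuple (d + 1) (s - j),
            ∏ i, ((2 * (β i : ℤ) + 1) ^ (α i))
      = PowerSeries.coeff (2 * s + d + 1)
          ((∏ i, Sodd (fun b => (2 * (b : ℤ) + 1) ^ (α i)))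
            * ((1 : PowerSeries ℤ) - X ^ 2) ^ (2 * s + 1 + d)) := by
  rw [coeff_mul_one_sub_sq_pow]
  have hsub : range (s + 1) ⊆ range (2 * s + 1 + d + 1) := Finset.range_subset_range.2 (by omega)
  have hvan : ∀ j ∈ range (2 * s + 1 + d + 1), j ∉ range (s + 1) →
      (-1 : ℤ) ^ j * ((2 * s + 1 + d).choose j : ℤ) *
        (if 2 * j ≤ 2 * s + d + 1 then
          PowerSeries.coeff (2 * s + d + 1 - 2 * j)
            (∏ i, Sodd (fun b => (2 * (b : ℤ) + 1) ^ (α i))) else 0) = 0 := by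
    intro j hj1 hj2
    simp only [mem_range, not_lt] at hj1 hj2
    by_cases hc : 2 * j ≤ 2 * s + d + 1
    · rw [if_pos hc, GLfull]
      have : ¬((2 * s + d + 1 - 2 * j) % 2 = (d + 1) % 2 ∧ d + 1 ≤ 2 * s + d + 1 - 2 * j) := by
        omega
      rw [if_neg this, mul_zero]
    · rw [if_neg hc, mul_zero]
  rw [← Finset.sum_subset hsub hvan]
  apply Finset.sum_congr rfl
  intro j hj
  rw [mem_range] at hj
  rw [hinner_lem s d j α (by omega), if_pos (by omega : 2 * j ≤ 2 * s + d + 1)]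

lemma hprod_lem (s d : ℕ) (α : Fin (d + 1) → ℕ) (hα : ∑ i, α i = 2 * s + 1) :
    (∏ i, Sodd (fun b => (2 * (b : ℤ) + 1) ^ (α i)))
      = (∏ i, Sodd (hx (α i))) * (Sev (fun _ => 1)) ^ (2 * s + 1 + d + 1) := by
  have h1 : ∀ i : Fin (d + 1), Sodd (fun b => (2 * (b : ℤ) + 1) ^ (α i))
      = Sodd (hx (α i)) * (Sev (fun _ => (1 : ℤ))) ^ (α i + 1) := fun i => PS1' (α i)
  rw [Finset.prod_congr rfl (fun i _ => h1 i), Finset.prod_mul_distrib,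
    Finset.prod_pow_eq_pow_sum]
  have hsum1 : ∑ i : Fin (d + 1), (α i + 1) = 2 * s + 1 + d + 1 := by
    rw [Finset.sum_add_distrib, hα]
    simp
    omega
  rw [hsum1]

lemma hstep3_lem (s d : ℕ) (α : Fin (d + 1) → ℕ) :
    PowerSeries.coeff (2 * s + d + 1) ((∏ i, Sodd (hx (α i))) * Sev (fun _ => 1))
      = ∑ T ∈ range (s + 1),
          ∑ t ∈ Finset.Nat.antidiagonalTuple (d + 1) T, ∏ i, hx (α i) (t i) := by
  rw [PowerSeries.coeff_mul, Finset.Nat.sum_antidiagonal_eq_sum_range_succ_mk]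
  refine (Finset.sum_of_injOn (fun T => 2 * T + (d + 1)) ?_ ?_ ?_ ?_).symm
  · intro x _ y _ hxy
    simp only at hxy
    omega
  · intro T hT
    simp only [coe_range, Set.mem_Iio, mem_coe, mem_range] at hT ⊢
    omega
  · intro x hx1 hx2
    simp only [mem_range] at hx1
    rw [GLfull]
    by_cases hc : x % 2 = (d + 1) % 2 ∧ d + 1 ≤ x
    · exfalso
      apply hx2
      refine ⟨(x - (d + 1)) / 2, ?_, by show 2 * ((x - (d + 1)) / 2) + (d + 1) = x; omega⟩
      simp only [coe_range, Set.mem_Iio, mem_coe, mem_range]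
      omega
    · rw [if_neg hc, zero_mul]
  · intro T hT
    simp only [mem_range] at hT
    rw [GLfull]
    have hc : (2 * T + (d + 1)) % 2 = (d + 1) % 2 ∧ d + 1 ≤ 2 * T + (d + 1) := by omega
    rw [if_pos hc]
    have harg : (2 * T + (d + 1) - (d + 1)) / 2 = T := by omega
    rw [harg, coeff_Sev]
    have h1 : (2 * s + d + 1 - (2 * T + (d + 1))) % 2 = 0 := by omega
    rw [h1]
    simp

/-- The case γ = 0 of the Heo–Xu identity. -/
theorem heo_xu_gamma_zero (s d : ℕ) (α : Fin (d + 1) → ℕ)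
    (hα : ∑ i, α i = 2 * s + 1) :
    ∑ j ∈ Finset.range (s + 1),
        (-1 : ℤ) ^ j * (2 * s + 1 + d).choose j *
          ∑ β ∈ Finset.Nat.antidiagonalTuple (d + 1) (s - j),
            ∏ i, ((2 * β i + 1) ^ (α i) : ℤ) =
      2 ^ (2 * s) * ∏ i, ((α i).factorial : ℤ) := by
  have hstep2 : (∏ i, Sodd (fun b => (2 * (b : ℤ) + 1) ^ (α i)))
      * ((1 : PowerSeries ℤ) - X ^ 2) ^ (2 * s + 1 + d)
      = (∏ i, Sodd (hx (α i))) * Sev (fun _ => 1) := by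
    rw [hprod_lem s d α hα]
    have hgu : (Sev (fun _ => (1:ℤ))) * ((1 : PowerSeries ℤ) - X ^ 2) = 1 := by
      rw [mul_comm]; exact one_sub_X_sq_mul_G
    calc (∏ i, Sodd (hx (α i))) * (Sev (fun _ => (1:ℤ))) ^ (2 * s + 1 + d + 1)
          * ((1 : PowerSeries ℤ) - X ^ 2) ^ (2 * s + 1 + d)
        = (∏ i, Sodd (hx (α i))) * Sev (fun _ => 1) *
            ((Sev (fun _ => (1:ℤ))) ^ (2 * s + 1 + d)
              * ((1 : PowerSeries ℤ) - X ^ 2) ^ (2 * s + 1 + d)) := by ring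
      _ = (∏ i, Sodd (hx (α i))) * Sev (fun _ => 1) *
            ((Sev (fun _ => (1:ℤ)) * ((1 : PowerSeries ℤ) - X ^ 2)) ^ (2 * s + 1 + d)) := by
          rw [mul_pow]
      _ = (∏ i, Sodd (hx (α i))) * Sev (fun _ => 1) := by rw [hgu, one_pow, mul_one]
  rw [hstep1_lem s d α, hstep2, hstep3_lem s d α]
  exact final_sum s d α hα
end
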